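/- Let X = {x₁,...,x_m} be a Grassmannian frame for R^n at angle α whose frame operator has largest eigenvalue λ₁ with unit eigenvector e₁, and assume λ₁ is maximal among largest eigenvalues of all Grassmannian frames of m vectors for R^n. Then for every x ∈ X, e₁ lies in the span of {x} ∪ {y ∈ X : y ≠ x, |⟨x,y⟩| = α}. -/

import Mathlib

open scoped RealInnerProductSpace
abbrev E (n : ℕ) := EuclideanSpace ℝ (Fin n)
noncomputable def coh {n : ℕ} (X : Set (E n)) : ℝ :=
  sSup {r : ℝ | ∃ x ∈ X, ∃ y ∈ X, x ≠ y ∧ r = |⟪x, y⟫|}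
def IsUnitSet {n : ℕ} (X : Set (E n)) : Prop := ∀ x ∈ X, ‖x‖ = 1
def Isolated {n : ℕ} (X : Set (E n)) (x : E n) : Prop :=
  ∀ y ∈ X, y ≠ x → |⟪x, y⟫| < coh X
def Isolable {n : ℕ} (X : Set (E n)) (x : E n) : Prop :=
  ∀ ε > 0, ∃ x' : E n, ‖x'‖ = 1 ∧ ‖x - x'‖ < ε ∧ ∀ y ∈ X, y ≠ x → |⟪x', y⟫| < coh X
def Grassmannian {n : ℕ} (m : ℕ) (X : Set (E n)) : Prop :=
  IsUnitSet X ∧ X.Finite ∧ X.ncard = m ∧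
    ∀ Y : Set (E n), IsUnitSet Y → Y.Finite → Y.ncard = m → coh X ≤ coh Y


/-! Suppose `e` is not in the span `V` of `x` and its packing neighbours, and pick `q ⊥ V` with
`⟪q, e⟫ ≠ 0`. Replace `x` by the normalisation `x'` of `x + t • q` for a small `t` of suitable
sign. Inner products with the neighbours only shrink, since these are orthogonal to `q`, and those
with the remaining vectors stay below `α` by continuity; so the new frame is again Grassmannian.
But `⟪x', e⟫ ^ 2 > ⟪x, e⟫ ^ 2`, so the Rayleigh quotient of its frame operator at `e` exceeds `λ₁`,
and therefore so does its largest eigenvalue. -/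

open Filter
open scoped Topology

section InnerProductSpace

variable {H : Type*} [NormedAddCommGroup H] [InnerProductSpace ℝ H]

theorem LinearMap.IsSymmetric.exists_eigenvalue_gt [FiniteDimensional ℝ H] {T : H →ₗ[ℝ] H}
    (hT : T.IsSymmetric) {c : ℝ} {w : H} (hw : c * ‖w‖ ^ 2 < ⟪T w, w⟫) :
    ∃ μ : ℝ, ∃ v : H, v ≠ 0 ∧ T v = μ • v ∧ c < μ := by
  have hw0 : w ≠ 0 := by rintro rfl; simp at hw
  have : Nontrivial H := ⟨⟨w, 0, hw0⟩⟩
  obtain ⟨v, hv⟩ := hT.hasEigenvalue_iSup_of_finiteDimensional.exists_hasEigenvector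
  refine ⟨_, v, hv.2, hv.apply_eq_smul, ?_⟩
  have hbdd : BddAbove (Set.range fun x : {x : H // x ≠ 0} ↦ RCLike.re ⟪T x, x⟫ / ‖(x : H)‖ ^ 2) :=
    ⟨‖LinearMap.toContinuousLinearMap T‖, by
      rintro _ ⟨x, rfl⟩
      exact (abs_le.1 ((LinearMap.toContinuousLinearMap T).rayleighQuotient_le_norm x)).2⟩
  calc c < ⟪T w, w⟫ / ‖w‖ ^ 2 := by rwa [lt_div_iff₀ (by positivity)]
    _ ≤ _ := le_ciSup hbdd ⟨w, hw0⟩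

theorem Submodule.exists_mem_orthogonal_inner_ne_zero {K : Submodule ℝ H}
    [K.HasOrthogonalProjection] {e : H} (he : e ∉ K) : ∃ q ∈ Kᗮ, ⟪q, e⟫ ≠ 0 := by
  by_contra! h
  rw [← K.orthogonal_orthogonal] at he
  exact he ((Kᗮ).mem_orthogonal e |>.2 h)

noncomputable def frameOperator (F : Finset H) : H →ₗ[ℝ] H where
  toFun v := ∑ z ∈ F, ⟪z, v⟫ • z
  map_add' u v := by simp only [inner_add_right, add_smul, Finset.sum_add_distrib]
  map_smul' c v := by simp only [inner_smul_right, smul_smul, Finset.smul_sum, RingHom.id_apply]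

theorem frameOperator_apply (F : Finset H) (v : H) :
    frameOperator F v = ∑ z ∈ F, ⟪z, v⟫ • z :=
  rfl

theorem inner_frameOperator_left (F : Finset H) (u v : H) :
    ⟪frameOperator F u, v⟫ = ∑ z ∈ F, ⟪z, u⟫ * ⟪z, v⟫ := by
  simp only [frameOperator_apply, sum_inner, real_inner_smul_left]

theorem frameOperator_isSymmetric (F : Finset H) : (frameOperator F).IsSymmetric := by
  intro u v
  rw [inner_frameOperator_left, real_inner_comm, inner_frameOperator_left]
  exact Finset.sum_congr rfl fun z _ ↦ mul_comm _ _

theorem inner_frameOperator_exchange [DecidableEq H] {F : Finset H} {x x' : H} (hx : x ∈ F)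
    (hx' : x' ∉ F) (v : H) :
    ⟪frameOperator (insert x' (F.erase x)) v, v⟫ =
      ⟪frameOperator F v, v⟫ - ⟪x, v⟫ ^ 2 + ⟪x', v⟫ ^ 2 := by
  simp only [inner_frameOperator_left, ← sq]
  rw [Finset.sum_insert (fun h ↦ hx' (Finset.mem_of_mem_erase h)), ← Finset.add_sum_erase F _ hx]
  ring

theorem sq_mul_one_add_lt_sq_add {a b t k : ℝ} (hab : 0 ≤ a * b) (hb : b ≠ 0) (ht : 0 < t)
    (htk : t * |a| * k ≤ |b|) : a ^ 2 * (1 + t ^ 2 * k) < (a + t * b) ^ 2 := by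
  have hk : a ^ 2 * (t ^ 2 * k) ≤ t * (a * b) :=
    calc a ^ 2 * (t ^ 2 * k) = t * |a| * (t * |a| * k) := by rw [← sq_abs a]; ring
      _ ≤ t * |a| * |b| := by gcongr
      _ = t * (a * b) := by rw [mul_assoc, ← abs_mul, abs_of_nonneg hab]
  nlinarith [mul_pos (pow_pos ht 2) (pow_pos (abs_pos.2 hb) 2), sq_abs b, mul_nonneg ht.le hab]

theorem exists_unit_near_sq_inner_gt_of_nonneg {x q e : H} (hx : ‖x‖ = 1) (hxq : ⟪x, q⟫ = 0)
    (hqe : ⟪q, e⟫ ≠ 0) (hsign : 0 ≤ ⟪x, e⟫ * ⟪q, e⟫) {P : H → Prop} (hP : ∀ᶠ z in 𝓝 x, P z) :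
    ∃ x', P x' ∧ ‖x'‖ = 1 ∧ ⟪x, e⟫ ^ 2 < ⟪x', e⟫ ^ 2 ∧
      ∀ y, ⟪q, y⟫ = 0 → |⟪x', y⟫| ≤ |⟪x, y⟫| := by
  set u : ℝ → H := fun t ↦ x + t • q
  have hu_sq (t : ℝ) : ‖u t‖ ^ 2 = 1 + t ^ 2 * ‖q‖ ^ 2 := by
    rw [norm_add_sq_real, real_inner_smul_right, hxq, norm_smul, hx, Real.norm_eq_abs, mul_pow,
      sq_abs]
    ring
  have hu_one (t : ℝ) : 1 ≤ ‖u t‖ := by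
    nlinarith [hu_sq t, norm_nonneg (u t), sq_nonneg t, sq_nonneg ‖q‖]
  have hlim : Tendsto (fun t ↦ ‖u t‖⁻¹ • u t) (𝓝 0) (𝓝 x) := by
    have hcont : Continuous u := by fun_prop
    have h0 : ‖u 0‖ ≠ 0 := by simp [u, hx]
    have hc : ContinuousAt (fun t ↦ ‖u t‖⁻¹ • u t) 0 :=
      (hcont.norm.continuousAt.inv₀ h0).smul hcont.continuousAt
    convert hc.tendsto
    simp [u, hx]
  have hsmall : ∀ᶠ t in 𝓝[>] 0, t * |⟪x, e⟫| * ‖q‖ ^ 2 ≤ |⟪q, e⟫| := by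
    refine nhdsWithin_le_nhds ((ContinuousAt.eventually_lt (by fun_prop) continuousAt_const ?_).mono
      fun _ h ↦ h.le)
    simpa using hqe
  obtain ⟨t, hPt, htsmall, ht⟩ := (((hlim.eventually hP).filter_mono nhdsWithin_le_nhds).and
    (hsmall.and self_mem_nhdsWithin)).exists
  have hinner (y : H) : ⟪‖u t‖⁻¹ • u t, y⟫ = ‖u t‖⁻¹ * (⟪x, y⟫ + t * ⟪q, y⟫) := by
    rw [real_inner_smul_left, inner_add_left, real_inner_smul_left]
  have hu_pos : 0 < ‖u t‖ := zero_lt_one.trans_le (hu_one t)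
  refine ⟨_, hPt, norm_smul_inv_norm (𝕜 := ℝ) (norm_pos_iff.1 hu_pos), ?_, fun y hy ↦ ?_⟩
  · rw [hinner, mul_pow, inv_pow, hu_sq, inv_mul_eq_div, lt_div_iff₀ (by positivity)]
    exact sq_mul_one_add_lt_sq_add hsign hqe ht htsmall
  · rw [hinner, hy, mul_zero, add_zero, abs_mul, abs_inv, abs_norm]
    exact mul_le_of_le_one_left (abs_nonneg _) (inv_le_one_of_one_le₀ (hu_one t))

theorem exists_unit_near_sq_inner_gt {x q e : H} (hx : ‖x‖ = 1) (hxq : ⟪x, q⟫ = 0)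
    (hqe : ⟪q, e⟫ ≠ 0) {P : H → Prop} (hP : ∀ᶠ z in 𝓝 x, P z) :
    ∃ x', P x' ∧ ‖x'‖ = 1 ∧ ⟪x, e⟫ ^ 2 < ⟪x', e⟫ ^ 2 ∧
      ∀ y, ⟪q, y⟫ = 0 → |⟪x', y⟫| ≤ |⟪x, y⟫| := by
  rcases le_total 0 (⟪x, e⟫ * ⟪q, e⟫) with hsign | hsign
  · exact exists_unit_near_sq_inner_gt_of_nonneg hx hxq hqe hsign hP
  · obtain ⟨x', hPx', hx', hgain, hnbr⟩ := exists_unit_near_sq_inner_gt_of_nonneg (q := -q) hx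
      (by rw [inner_neg_right, hxq, neg_zero]) (by rwa [inner_neg_left, neg_ne_zero])
      (by rwa [inner_neg_left, mul_neg, neg_nonneg]) hP
    exact ⟨x', hPx', hx', hgain, fun y hy ↦ hnbr y (by rw [inner_neg_left, hy, neg_zero])⟩

end InnerProductSpace

section Coherence

variable {n : ℕ} {X : Set (E n)}

theorem coh_nonneg (X : Set (E n)) : 0 ≤ coh X :=
  Real.sSup_nonneg fun _ ⟨_, _, _, _, _, hr⟩ ↦ hr ▸ abs_nonneg _

theorem abs_inner_le_coh (hX : X.Finite) {x y : E n} (hx : x ∈ X) (hy : y ∈ X) (hxy : x ≠ y) :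
    |⟪x, y⟫| ≤ coh X := by
  refine le_csSup ?_ ⟨x, hx, y, hy, hxy, rfl⟩
  refine ((hX.prod hX).image fun p ↦ |⟪p.1, p.2⟫|).bddAbove.mono ?_
  rintro _ ⟨x, hx, y, hy, -, rfl⟩
  exact ⟨(x, y), ⟨hx, hy⟩, rfl⟩

theorem coh_le {c : ℝ} (hc : 0 ≤ c) (h : ∀ x ∈ X, ∀ y ∈ X, x ≠ y → |⟪x, y⟫| ≤ c) :
    coh X ≤ c :=
  Real.sSup_le (fun _ ⟨x, hx, y, hy, hxy, hr⟩ ↦ hr ▸ h x hx y hy hxy) hc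

theorem Grassmannian.exchange {m : ℕ} (hX : Grassmannian m X) {x x' : E n} (hx : x ∈ X)
    (hx' : x' ∉ X) (hx'_norm : ‖x'‖ = 1) (hcoh : ∀ y ∈ X \ {x}, |⟪x', y⟫| ≤ coh X) :
    Grassmannian m (insert x' (X \ {x})) := by
  obtain ⟨hunit, hfin, hcard, hmin⟩ := hX
  have hcohY : coh (insert x' (X \ {x})) ≤ coh X := by
    refine coh_le (coh_nonneg X) ?_
    rintro y (rfl | ⟨hyX, hyx⟩) z (rfl | ⟨hzX, hzx⟩) hyz
    · exact absurd rfl hyz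
    · exact hcoh z ⟨hzX, hzx⟩
    · rw [real_inner_comm]
      exact hcoh y ⟨hyX, hyx⟩
    · exact abs_inner_le_coh hfin hyX hzX hyz
  refine ⟨?_, hfin.sdiff.insert x', by rw [Set.ncard_exchange hx' hx, hcard],
    fun Y hYu hYf hYc ↦ hcohY.trans (hmin Y hYu hYf hYc)⟩
  rintro y (rfl | ⟨hyX, -⟩)
  exacts [hx'_norm, hunit y hyX]

end Coherence

theorem top_eigenvector_in_span_of_neighbors_general {n m : ℕ}
    (X : Set (E n)) (hX : Grassmannian m X) (hfin : X.Finite)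
    (α : ℝ) (hα : coh X = α)
    (lam : ℝ) (e : E n)
    (heig : ∑ x ∈ hfin.toFinset, ⟪x, e⟫ • x = lam • e)
    (hbig : ∀ Y : Set (E n), Grassmannian m Y → ∀ hYf : Y.Finite,
      ∀ μ : ℝ, ∀ v : E n, v ≠ 0 →
        (∑ x ∈ hYf.toFinset, ⟪x, v⟫ • x = μ • v) → μ ≤ lam) :
    ∀ x ∈ X, e ∈ Submodule.span ℝ ({x} ∪ {y | y ∈ X ∧ y ≠ x ∧ |⟪x, y⟫| = α}) := by
  classical
  intro x hx
  by_contra hxe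
  obtain ⟨q, hqV, hqe⟩ := Submodule.exists_mem_orthogonal_inner_ne_zero hxe
  have hq_nbr {y : E n} (hy : y ∈ X) (hyx : y ≠ x) (hyα : |⟪x, y⟫| = α) : ⟪q, y⟫ = 0 :=
    Submodule.inner_left_of_mem_orthogonal (Submodule.subset_span (Or.inr ⟨hy, hyx, hyα⟩)) hqV
  have hnear : ∀ᶠ z in 𝓝 x, z ∉ X \ {x} ∧ ∀ y ∈ X \ {x}, |⟪x, y⟫| < α → |⟪z, y⟫| < α :=
    Eventually.and (hfin.sdiff.isClosed.compl_mem_nhds fun h ↦ h.2 rfl) <|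
      (hfin.sdiff.eventually_all).2 fun y _ ↦ eventually_imp_distrib_left.2 fun h ↦
        ContinuousAt.eventually_lt (by fun_prop) continuousAt_const h
  obtain ⟨x', ⟨hx'_other, hx'_far⟩, hx'_norm, hgain, hx'_nbr⟩ :=
    exists_unit_near_sq_inner_gt (hX.1 x hx)
      (Submodule.inner_right_of_mem_orthogonal (Submodule.subset_span (Or.inl rfl)) hqV) hqe hnear
  have hx'X : x' ∉ X := fun h ↦ hx'_other ⟨h, by rintro rfl; exact hgain.false⟩
  have hcoh : ∀ y ∈ X \ {x}, |⟪x', y⟫| ≤ coh X := by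
    rintro y ⟨hy, hyx⟩
    rcases (hα ▸ abs_inner_le_coh hfin hx hy (Ne.symm hyx)).eq_or_lt with hyα | hyα
    · exact (hx'_nbr y (hq_nbr hy hyx hyα)).trans (hyα.trans hα.symm).le
    · exact (hx'_far y ⟨hy, hyx⟩ hyα).le.trans hα.ge
  have hY := hX.exchange hx hx'X hx'_norm hcoh
  have hYfin : hY.2.1.toFinset = insert x' (hfin.toFinset.erase x) := by ext; simp [and_comm]
  have hray : lam * ‖e‖ ^ 2 < ⟪frameOperator hY.2.1.toFinset e, e⟫ := by
    rw [hYfin, inner_frameOperator_exchange (hfin.mem_toFinset.2 hx) (by simpa using hx'X),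
      frameOperator_apply, heig, real_inner_smul_left, real_inner_self_eq_norm_sq]
    linarith
  obtain ⟨μ, v, hv, hSv, hμ⟩ := (frameOperator_isSymmetric _).exists_eigenvalue_gt hray
  exact (hbig _ hY hY.2.1 μ v hv hSv).not_gt hμ

theorem top_eigenvector_in_span_of_neighbors {n m : ℕ} (hn : 0 < n) (hmn : n < m)
    (X : Set (E n)) (hX : Grassmannian m X) (hfin : X.Finite)
    (α : ℝ) (hα : coh X = α)
    (lam : ℝ) (e : E n) (he : ‖e‖ = 1)
    (heig : ∑ x ∈ hfin.toFinset, ⟪x, e⟫ • x = lam • e)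
    (hmax : ∀ μ : ℝ, ∀ v : E n, v ≠ 0 →
      (∑ x ∈ hfin.toFinset, ⟪x, v⟫ • x = μ • v) → μ ≤ lam)
    (hbig : ∀ Y : Set (E n), Grassmannian m Y → ∀ hYf : Y.Finite,
      ∀ μ : ℝ, ∀ v : E n, v ≠ 0 →
        (∑ x ∈ hYf.toFinset, ⟪x, v⟫ • x = μ • v) → μ ≤ lam) :
    ∀ x ∈ X, e ∈ Submodule.span ℝ ({x} ∪ {y | y ∈ X ∧ y ≠ x ∧ |⟪x, y⟫| = α}) :=
  top_eigenvector_in_span_of_neighbors_general X hX hfin α hα lam e heig hbig
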